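/- Let P be the probability measure on {−2,0,2}³ that assigns probability 1/6 to each of the six triples (−2,0,2), (2,−2,0), (0,2,−2), (2,0,−2), (−2,2,0), (0,−2,2) and probability 0 to all other triples, and let X, Y, Z be the coordinate random variables. Then E[X] = E[Y] = E[Z] = 0 and Cov(X,Y) = Cov(Y,Z) = Cov(X,Z) = −4/3, so that Cov(X,Y) + Cov(Y,Z) + Cov(X,Z) = −4 < −1. Consequently, for random variables with values −2, 0, 2 and zero expectations, the inequality −1 ≤ E[XY] + E[YZ] + E[XZ] is not necessary for the existence of a joint probability distribution. -/

import Mathlib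

/-! The measure is `1/6` times counting measure on a six-point support, so every expectation is
a sixth of the sum of the integrand over those six triples. The means vanish since each coordinate
takes every value of `{-2, 0, 2}` twice there, and each of `XY`, `YZ`, `XZ` equals `-4` at two
support points and `0` at the other four, giving `-8/6 = -4/3`. -/

open scoped Classical

/-- The sample space `{-2,0,2}³` with coordinates `X, Y, Z`. -/
abbrev TwoTernTriple : Type :=
  ({-2, 0, 2} : Finset ℝ) × ({-2, 0, 2} : Finset ℝ) × ({-2, 0, 2} : Finset ℝ)

open Finset

theorem Finset.sum_coe_sort_prod_prod {α M : Type*} [AddCommMonoid M] (A B C : Finset α)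
    (f : α × α × α → M) :
    ∑ s : A × B × C, f (s.1, s.2.1, s.2.2) = ∑ x ∈ A ×ˢ B ×ˢ C, f x := by
  simp only [Fintype.sum_prod_type, sum_product, univ_eq_attach]
  rw [sum_attach A fun a => ∑ b ∈ B.attach, ∑ c ∈ C.attach, f (a, b, c)]
  refine sum_congr rfl fun a _ => ?_
  rw [sum_attach B fun b => ∑ c ∈ C.attach, f (a, b, c)]
  exact sum_congr rfl fun b _ => sum_attach C fun c => f (a, b, c)

theorem Finset.sum_ite_mem_mul_of_subset {ι R : Type*} [NonUnitalNonAssocSemiring R]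
    {s t : Finset ι} (h : t ⊆ s) [DecidablePred (· ∈ (t : Set ι))] (c : R) (g : ι → R) :
    ∑ i ∈ s, (if i ∈ (t : Set ι) then c else 0) * g i = c * ∑ i ∈ t, g i := by
  simp only [mem_coe, ite_mul, zero_mul, ← sum_filter, filter_mem_eq_inter,
    inter_eq_right.mpr h, mul_sum]

theorem sum_mul_of_eq_const_on_support {α R : Type*} [NonUnitalNonAssocSemiring R]
    {A B C : Finset α} {T : Finset (α × α × α)} (hT : T ⊆ A ×ˢ B ×ˢ C) (c : R)
    (p : A × B × C → R)
    (hp : ∀ s : A × B × C,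
      p s = if ((s.1 : α), (s.2.1 : α), (s.2.2 : α)) ∈ (T : Set _) then c else 0)
    (g : α × α × α → R) :
    ∑ s, p s * g (s.1, s.2.1, s.2.2) = c * ∑ t ∈ T, g t := by
  simp only [hp]
  rw [sum_coe_sort_prod_prod A B C fun x => (if x ∈ (T : Set _) then c else 0) * g x,
    sum_ite_mem_mul_of_subset hT]

noncomputable def sixTriples : Finset (ℝ × ℝ × ℝ) :=
  {(-2, 0, 2), (2, -2, 0), (0, 2, -2), (2, 0, -2), (-2, 2, 0), (0, -2, 2)}

theorem coe_sixTriples : (sixTriples : Set (ℝ × ℝ × ℝ)) =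
    {(-2, 0, 2), (2, -2, 0), (0, 2, -2), (2, 0, -2), (-2, 2, 0), (0, -2, 2)} := by
  simp [sixTriples]

theorem sixTriples_subset :
    sixTriples ⊆ {-2, 0, 2} ×ˢ {-2, 0, 2} ×ˢ ({-2, 0, 2} : Finset ℝ) := by
  simp [sixTriples, insert_subset_iff]

theorem sum_sixTriples (g : ℝ × ℝ × ℝ → ℝ) :
    ∑ t ∈ sixTriples, g t =
      g (-2, 0, 2) + g (2, -2, 0) + g (0, 2, -2) + g (2, 0, -2) + g (-2, 2, 0) + g (0, -2, 2) := by
  rw [sixTriples, sum_insert, sum_insert, sum_insert, sum_insert, sum_insert, sum_singleton] <;>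
    norm_num
  ring

theorem two_valued_covariance_counterexample
    (p : TwoTernTriple → ℝ)
    (hp : ∀ s : TwoTernTriple, p s =
      if ((s.1 : ℝ), (s.2.1 : ℝ), (s.2.2 : ℝ)) ∈
          ({(-2, 0, 2), (2, -2, 0), (0, 2, -2), (2, 0, -2), (-2, 2, 0), (0, -2, 2)} :
            Set (ℝ × ℝ × ℝ))
        then 1/6 else 0) :
    (∀ s, 0 ≤ p s) ∧ (∑ s, p s = 1) ∧
    -- zero means
    (∑ s, p s * (s.1 : ℝ)) = 0 ∧
    (∑ s, p s * (s.2.1 : ℝ)) = 0 ∧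
    (∑ s, p s * (s.2.2 : ℝ)) = 0 ∧
    -- covariances -4/3
    (∑ s, p s * ((s.1 : ℝ) * (s.2.1 : ℝ))) -
      (∑ s, p s * (s.1 : ℝ)) * (∑ s, p s * (s.2.1 : ℝ)) = -4/3 ∧
    (∑ s, p s * ((s.2.1 : ℝ) * (s.2.2 : ℝ))) -
      (∑ s, p s * (s.2.1 : ℝ)) * (∑ s, p s * (s.2.2 : ℝ)) = -4/3 ∧
    (∑ s, p s * ((s.1 : ℝ) * (s.2.2 : ℝ))) -
      (∑ s, p s * (s.1 : ℝ)) * (∑ s, p s * (s.2.2 : ℝ)) = -4/3 ∧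
    -- the sum of the covariances is -4 < -1
    (-4/3 : ℝ) + (-4/3) + (-4/3) = -4 ∧ (-4 : ℝ) < -1 := by
  have hnonneg : ∀ s, 0 ≤ p s := fun s => by rw [hp s]; split <;> norm_num
  simp only [← coe_sixTriples] at hp
  have E := sum_mul_of_eq_const_on_support sixTriples_subset (1 / 6) p hp
  have htot : ∑ s, p s = 1 := by
    simpa only [mul_one] using (E fun _ => 1).trans (by rw [sum_sixTriples]; norm_num)
  have hX : ∑ s, p s * (s.1 : ℝ) = 0 := by rw [E Prod.fst, sum_sixTriples]; norm_num
  have hY : ∑ s, p s * (s.2.1 : ℝ) = 0 := by rw [E fun x => x.2.1, sum_sixTriples]; norm_num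
  have hZ : ∑ s, p s * (s.2.2 : ℝ) = 0 := by rw [E fun x => x.2.2, sum_sixTriples]; norm_num
  refine ⟨hnonneg, htot, hX, hY, hZ, ?_, ?_, ?_, by norm_num, by norm_num⟩
  · rw [hX, hY, E fun x => x.1 * x.2.1, sum_sixTriples]; norm_num
  · rw [hY, hZ, E fun x => x.2.1 * x.2.2, sum_sixTriples]; norm_num
  · rw [hX, hZ, E fun x => x.1 * x.2.2, sum_sixTriples]; norm_num
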